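/- arXiv:2105.11713 — 6 statements merged into one kernel-verified Lean document; each statement's English description precedes it below -/
import Mathlib

section
/- Let n ≥ 1, k ≥ 1 and let α : Fin n → Fin k be a surjective randomness configuration with fiber sizes n_c = |α⁻¹(c)|. Let R be distributed according to μ and set X i = R (α i). Then lim_{t→∞} μ({R : ∃ i ∈ Fin n, ∀ l ≠ i, K^X l t ≠ K^X i t}) = 1 if and only if there exists c ∈ Fin k with n_c = 1. (This is the paper's Theorem: leader election in the blackboard model is eventually solvable iff some randomness source is connected to exactly one party.) -/
open MeasureTheory Filter
open scoped ENNReal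

/-- Blackboard knowledge values at time `t`: `init` at time `0`; at time `t+1` a knowledge
value is the previous knowledge, the fresh random bit, and the multiset of the other nodes'
previous knowledge values. (This is the time-indexed form of the inductive type `W` with
constructors `init : W` and `step : W → Bool → Multiset W → W`.) -/
def BBW : ℕ → Type
  | 0 => Unit
  | t + 1 => BBW t × Bool × Multiset (BBW t)

/-- The blackboard knowledge `K^x i t` of node `i` at time `t`, given the bit sequences `x`:
`K^x i 0 = init` and `K^x i (t+1) = step (K^x i t) (x i t) {K^x j t : j ≠ i}`. -/
def bbK {n : ℕ} (x : Fin n → ℕ → Bool) : Fin n → (t : ℕ) → BBW t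
  | _, 0 => ()
  | i, t + 1 => (bbK x i t, x i t, (Finset.univ.erase i).val.map (fun j => bbK x j t))

/-- Nodes with identical bit sequences have identical blackboard knowledge at all times. -/
lemma bbK_eq_of_bits_eq {n : ℕ} (x : Fin n → ℕ → Bool) (i j : Fin n) (h : x i = x j) :
    ∀ t, bbK x i t = bbK x j t := by
  intro t
  induction t with
  | zero => rfl
  | succ t ih =>
    show ((bbK x i t, x i t, (Finset.univ.erase i).val.map (fun l => bbK x l t))
        : BBW t × Bool × Multiset (BBW t))
      = (bbK x j t, x j t, (Finset.univ.erase j).val.map (fun l => bbK x l t))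
    have key : ∀ a : Fin n, (bbK x a t) ::ₘ (Finset.univ.erase a).val.map (fun l => bbK x l t)
        = Finset.univ.val.map (fun l => bbK x l t) := by
      intro a
      rw [Finset.erase_val]
      conv_rhs => rw [← Multiset.cons_erase (Finset.mem_val.mpr (Finset.mem_univ a)),
        Multiset.map_cons]
    have h2 := (key i).trans (key j).symm
    rw [ih] at h2
    rw [Prod.mk.injEq, Prod.mk.injEq]
    exact ⟨ih, by rw [h], (Multiset.cons_inj_right _).mp h2⟩

/-- The blackboard knowledge of a node at time `t` determines its bits at all times `s < t`. -/
lemma bbK_bits_of_eq {n : ℕ} (x : Fin n → ℕ → Bool) (i j : Fin n) :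
    ∀ t, bbK x i t = bbK x j t → ∀ s, s < t → x i s = x j s := by
  intro t
  induction t with
  | zero => intro _ s hs; omega
  | succ t ih =>
    intro h s hs
    have h' : ((bbK x i t, x i t, (Finset.univ.erase i).val.map (fun l => bbK x l t))
        : BBW t × Bool × Multiset (BBW t))
      = (bbK x j t, x j t, (Finset.univ.erase j).val.map (fun l => bbK x l t)) := h
    rw [Prod.mk.injEq, Prod.mk.injEq] at h'
    obtain ⟨h1, h2, _⟩ := h'
    rcases Nat.lt_succ_iff_lt_or_eq.mp hs with hs' | hs'
    · exact ih h1 s hs'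
    · subst hs'; exact h2

/-- The probability that two distinct sources agree on their first `t` bits is at most `2⁻¹ ^ t`. -/
lemma agree_measure_le (k : ℕ) (μ : Measure (Fin k → ℕ → Bool)) [IsProbabilityMeasure μ]
    (hμ : ∀ (t : ℕ) (y : Fin k → Fin t → Bool),
      μ {R | ∀ (c : Fin k) (s : Fin t), R c (s : ℕ) = y c s} = (2 : ℝ≥0∞)⁻¹ ^ (k * t))
    (c c' : Fin k) (hc' : c' ≠ c) (t : ℕ) :
    μ {R : Fin k → ℕ → Bool | ∀ s : Fin t, R c' (s : ℕ) = R c (s : ℕ)} ≤ (2 : ℝ≥0∞)⁻¹ ^ t := by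
  classical
  set S : Finset (Fin k → Fin t → Bool) :=
    Finset.univ.filter (fun y => ∀ s : Fin t, y c' s = y c s) with hS
  have hdecomp : {R : Fin k → ℕ → Bool | ∀ s : Fin t, R c' (s : ℕ) = R c (s : ℕ)}
      = ⋃ y ∈ S, {R : Fin k → ℕ → Bool | ∀ (c'' : Fin k) (s : Fin t), R c'' (s : ℕ) = y c'' s} := by
    ext R
    simp only [Set.mem_setOf_eq, Set.mem_iUnion, exists_prop]
    constructor
    · intro hR
      refine ⟨fun c'' s => R c'' s, ?_, fun c'' s => rfl⟩
      simp only [hS, Finset.mem_filter, Finset.mem_univ, true_and]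
      exact hR
    · rintro ⟨y, hyS, hy⟩ s
      simp only [hS, Finset.mem_filter, Finset.mem_univ, true_and] at hyS
      rw [hy c' s, hy c s, hyS s]
  have hmeas : ∀ y ∈ S, MeasurableSet
      {R : Fin k → ℕ → Bool | ∀ (c'' : Fin k) (s : Fin t), R c'' (s : ℕ) = y c'' s} := by
    intro y _
    have : {R : Fin k → ℕ → Bool | ∀ (c'' : Fin k) (s : Fin t), R c'' (s : ℕ) = y c'' s}
        = ⋂ (c'' : Fin k), ⋂ (s : Fin t),
          (fun R : Fin k → ℕ → Bool => R c'' (s : ℕ)) ⁻¹' {y c'' s} := by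
      ext R; simp [Set.mem_iInter]
    rw [this]
    exact MeasurableSet.iInter fun c'' => MeasurableSet.iInter fun s =>
      (((measurable_pi_apply (s : ℕ)).comp (measurable_pi_apply c''))) (MeasurableSet.singleton _)
  have hdisj : (↑S : Set (Fin k → Fin t → Bool)).PairwiseDisjoint
      (fun y => {R : Fin k → ℕ → Bool | ∀ (c'' : Fin k) (s : Fin t), R c'' (s : ℕ) = y c'' s}) := by
    intro y1 _ y2 _ hne
    rw [Function.onFun, Set.disjoint_left]
    intro R hR1 hR2
    exact hne (funext fun c'' => funext fun s => (hR1 c'' s).symm.trans (hR2 c'' s))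
  rw [hdecomp, measure_biUnion_finset hdisj hmeas]
  have hcard : S.card ≤ 2 ^ (t * (k - 1)) := by
    have hinj : Set.InjOn (fun (y : Fin k → Fin t → Bool) (d : {d : Fin k // d ≠ c'}) => y d) S := by
      intro y1 h1 y2 h2 hfe
      simp only [hS, Finset.mem_coe, Finset.mem_filter, Finset.mem_univ, true_and] at h1 h2
      funext d s
      by_cases hd : d = c'
      · subst hd
        have hc : y1 c = y2 c := congrFun hfe ⟨c, Ne.symm hc'⟩
        rw [h1 s, h2 s, hc]
      · exact congrFun (congrFun hfe ⟨d, hd⟩) s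
    calc S.card ≤ Fintype.card ({d : Fin k // d ≠ c'} → Fin t → Bool) := by
          have := Finset.card_le_card_of_injOn _ (fun y _ => Finset.mem_univ _) hinj
          simpa using this
      _ = 2 ^ (t * (k - 1)) := by
          rw [Fintype.card_fun]
          have h1 : Fintype.card ({d : Fin k // d ≠ c'}) = k - 1 := by
            rw [Fintype.card_subtype_compl]
            simp
          rw [h1, Fintype.card_fun, Fintype.card_bool, Fintype.card_fin, ← pow_mul]
  calc ∑ y ∈ S, μ {R : Fin k → ℕ → Bool | ∀ (c'' : Fin k) (s : Fin t), R c'' (s : ℕ) = y c'' s}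
      = ∑ y ∈ S, (2 : ℝ≥0∞)⁻¹ ^ (k * t) := Finset.sum_congr rfl fun y _ => hμ t y
    _ = (S.card : ℝ≥0∞) * (2 : ℝ≥0∞)⁻¹ ^ (k * t) := by rw [Finset.sum_const, nsmul_eq_mul]
    _ ≤ ((2 : ℝ≥0∞) ^ (t * (k - 1))) * (2 : ℝ≥0∞)⁻¹ ^ (k * t) := by
        gcongr
        exact_mod_cast hcard
    _ = (2 : ℝ≥0∞)⁻¹ ^ t := by
        have hkt : k * t = t * (k - 1) + t := by
          cases k with
          | zero => exact c.elim0
          | succ m => simp only [Nat.succ_sub_one]; ring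
        rw [hkt, pow_add, ← mul_assoc, ← mul_pow,
          ENNReal.mul_inv_cancel two_ne_zero ENNReal.ofNat_ne_top, one_pow, one_mul]

/-- **Blackboard leader election (Theorem 1).** With `n ≥ 1` parties, `k ≥ 1` independent
randomness sources, a surjective randomness configuration `α`, and `μ` the product of fair-coin
measures on `Fin k → (ℕ → Bool)` (characterized by its cylinder probabilities `hμ`), setting
`X i = R (α i)`: leader election is eventually solvable — i.e. the probability that some node's
blackboard knowledge differs from that of all other nodes tends to `1` — if and only if some
source `c` is connected to exactly one party. -/
theorem blackboard_leader_election (n k : ℕ) (hn : 1 ≤ n) (hk : 1 ≤ k)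
    (α : Fin n → Fin k) (hα : Function.Surjective α)
    (μ : Measure (Fin k → ℕ → Bool)) [IsProbabilityMeasure μ]
    (hμ : ∀ (t : ℕ) (y : Fin k → Fin t → Bool),
      μ {R | ∀ (c : Fin k) (s : Fin t), R c (s : ℕ) = y c s} = (2 : ℝ≥0∞)⁻¹ ^ (k * t)) :
    Tendsto
      (fun t : ℕ => μ {R | ∃ i : Fin n, ∀ l : Fin n, l ≠ i →
        bbK (fun i' => R (α i')) l t ≠ bbK (fun i' => R (α i')) i t})
      atTop (nhds 1)
    ↔ ∃ c : Fin k, (Finset.univ.filter (fun i : Fin n => α i = c)).card = 1 := by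
  constructor
  · intro h
    by_contra hcon
    push_neg at hcon
    have h2 : ∀ c : Fin k, 1 < (Finset.univ.filter (fun i : Fin n => α i = c)).card := by
      intro c
      obtain ⟨i, hi⟩ := hα c
      have h1 : 0 < (Finset.univ.filter (fun i : Fin n => α i = c)).card :=
        Finset.card_pos.mpr ⟨i, Finset.mem_filter.mpr ⟨Finset.mem_univ i, hi⟩⟩
      have := hcon c; omega
    have hempty : ∀ t : ℕ, {R : Fin k → ℕ → Bool | ∃ i : Fin n, ∀ l : Fin n, l ≠ i →
        bbK (fun i' => R (α i')) l t ≠ bbK (fun i' => R (α i')) i t} = ∅ := by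
      intro t
      ext R
      simp only [Set.mem_setOf_eq, Set.mem_empty_iff_false, iff_false, not_exists]
      intro i hi
      obtain ⟨l, hl, hli⟩ := Finset.exists_mem_ne (h2 (α i)) i
      have hαl : α l = α i := (Finset.mem_filter.mp hl).2
      exact hi l hli (bbK_eq_of_bits_eq _ l i (congrArg R hαl) t)
    simp only [hempty, measure_empty] at h
    exact one_ne_zero (tendsto_nhds_unique h tendsto_const_nhds)
  · rintro ⟨c, hc⟩
    obtain ⟨i₀, hi₀⟩ := Finset.card_eq_one.mp hc
    have hαi₀ : α i₀ = c := by
      have := hi₀ ▸ Finset.mem_singleton_self i₀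
      exact (Finset.mem_filter.mp this).2
    have huniq : ∀ l : Fin n, α l = c → l = i₀ := by
      intro l hl
      have : l ∈ ({i₀} : Finset (Fin n)) :=
        hi₀ ▸ Finset.mem_filter.mpr ⟨Finset.mem_univ l, hl⟩
      exact Finset.mem_singleton.mp this
    -- Bad event: some other source agrees with `c` on all of its first `t` bits
    set Bad : ℕ → Set (Fin k → ℕ → Bool) := fun t =>
      ⋃ c' ∈ Finset.univ.erase c,
        {R : Fin k → ℕ → Bool | ∀ s : Fin t, R c' (s : ℕ) = R c (s : ℕ)} with hBad
    have hBadBound : ∀ t : ℕ, μ (Bad t) ≤ (k : ℝ≥0∞) * (2 : ℝ≥0∞)⁻¹ ^ t := by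
      intro t
      calc μ (Bad t)
          ≤ ∑ c' ∈ Finset.univ.erase c,
              μ {R : Fin k → ℕ → Bool | ∀ s : Fin t, R c' (s : ℕ) = R c (s : ℕ)} :=
            measure_biUnion_finset_le _ _
        _ ≤ ∑ _c' ∈ Finset.univ.erase c, (2 : ℝ≥0∞)⁻¹ ^ t := by
            refine Finset.sum_le_sum fun c' hc' => ?_
            exact agree_measure_le k μ hμ c c' (Finset.ne_of_mem_erase hc') t
        _ = ((Finset.univ.erase c).card : ℝ≥0∞) * (2 : ℝ≥0∞)⁻¹ ^ t := by
            rw [Finset.sum_const, nsmul_eq_mul]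
        _ ≤ (k : ℝ≥0∞) * (2 : ℝ≥0∞)⁻¹ ^ t := by
            gcongr
            exact_mod_cast (Finset.card_erase_le.trans (by simp))
    have hsub : ∀ t : ℕ, (Bad t)ᶜ ⊆ {R : Fin k → ℕ → Bool | ∃ i : Fin n, ∀ l : Fin n, l ≠ i →
        bbK (fun i' => R (α i')) l t ≠ bbK (fun i' => R (α i')) i t} := by
      intro t R hR
      refine ⟨i₀, fun l hl hKeq => ?_⟩
      have hαl : α l ≠ c := fun h => hl (huniq l h)
      have hbits := bbK_bits_of_eq (fun i' => R (α i')) l i₀ t hKeq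
      have hmem : α l ∈ Finset.univ.erase c := Finset.mem_erase.mpr ⟨hαl, Finset.mem_univ _⟩
      apply hR
      refine Set.mem_biUnion hmem ?_
      intro s
      have := hbits (s : ℕ) s.isLt
      simpa [hαi₀] using this
    have hlow : ∀ t : ℕ,
        1 - (k : ℝ≥0∞) * (2 : ℝ≥0∞)⁻¹ ^ t ≤
          μ {R : Fin k → ℕ → Bool | ∃ i : Fin n, ∀ l : Fin n, l ≠ i →
            bbK (fun i' => R (α i')) l t ≠ bbK (fun i' => R (α i')) i t} := by
      intro t
      have h1 : (1 : ℝ≥0∞) ≤ μ (Bad t) + μ ((Bad t)ᶜ) := by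
        have h2 := measure_union_le (μ := μ) (Bad t) (Bad t)ᶜ
        rw [Set.union_compl_self, measure_univ] at h2
        exact h2
      have h3 : 1 - μ (Bad t) ≤ μ ((Bad t)ᶜ) := tsub_le_iff_left.mpr h1
      calc 1 - (k : ℝ≥0∞) * (2 : ℝ≥0∞)⁻¹ ^ t
          ≤ 1 - μ (Bad t) := tsub_le_tsub_left (hBadBound t) 1
        _ ≤ μ ((Bad t)ᶜ) := h3
        _ ≤ _ := measure_mono (hsub t)
    have hupper : ∀ t : ℕ,
        μ {R : Fin k → ℕ → Bool | ∃ i : Fin n, ∀ l : Fin n, l ≠ i →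
            bbK (fun i' => R (α i')) l t ≠ bbK (fun i' => R (α i')) i t} ≤ 1 :=
      fun t => prob_le_one
    have hlowtendsto : Tendsto (fun t : ℕ => 1 - (k : ℝ≥0∞) * (2 : ℝ≥0∞)⁻¹ ^ t) atTop (nhds 1) := by
      have h0 : Tendsto (fun t : ℕ => (k : ℝ≥0∞) * (2 : ℝ≥0∞)⁻¹ ^ t) atTop (nhds 0) := by
        have hp : Tendsto (fun t : ℕ => (2 : ℝ≥0∞)⁻¹ ^ t) atTop (nhds 0) :=
          ENNReal.tendsto_pow_atTop_nhds_zero_of_lt_one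
            (by simp [ENNReal.inv_lt_one])
        have := ENNReal.Tendsto.const_mul (a := (k : ℝ≥0∞)) hp (Or.inr (ENNReal.natCast_ne_top k))
        simpa using this
      have := ENNReal.Tendsto.sub (tendsto_const_nhds (x := (1 : ℝ≥0∞))) h0
        (Or.inl ENNReal.one_ne_top)
      simpa using this
    exact tendsto_of_tendsto_of_tendsto_of_le_of_le hlowtendsto tendsto_const_nhds hlow hupper
end

section
/- Let A be a nonempty finite type and let μ be the product probability measure on ℕ → A whose coordinates are independent and uniformly distributed on A. For each t ≥ 1 let S_t be a set of words of length t over A (functions Fin t → A), and assume the family is stable under insertion into longer words: whenever w ∈ S_t, a, b ∈ ℕ, u is a word of length a and v is a word of length b, the concatenation u·w·v belongs to S_{a+t+b}. Then the events E_t = {ω : (ω 0, …, ω (t−1)) ∈ S_t} are nondecreasing in t, lim_{t→∞} μ(E_t) exists and belongs to {0,1}, and the limit equals 1 if and only if μ(E_t) > 0 for some t. (This is the paper's zero–one lemma: for every input-free symmetry-breaking task and randomness configuration, lim_{t→∞} Pr[𝒫(t) solves 𝒪 | α] ∈ {0,1}, and positive probability at some time forces eventual solvability.) -/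
open MeasureTheory Filter
open scoped ENNReal

/-!
If `μ (E t) > 0` for some `t ≥ 1` then `S t` contains a word. Cut a prefix of length `n * t`
into `n` consecutive blocks of length `t`: by insertion stability the prefix is solving as soon
as one block lies in `S t`, so the prefix fails only if all `n` blocks avoid `S t`, an event of
probability at most `(1 - |A|⁻ᵗ)ⁿ → 0`. Hence the nondecreasing probabilities `μ (E t)` tend to
`1`; otherwise they all vanish.
-/

theorem ENNReal.natCast_sub_one_mul_inv_lt_one (N : ℕ) :
    ((N - 1 : ℕ) : ℝ≥0∞) * (N : ℝ≥0∞)⁻¹ < 1 := by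
  rcases N.eq_zero_or_pos with rfl | hN
  · simp
  rw [← div_eq_mul_inv,
    ENNReal.div_lt_iff (.inl (by positivity)) (.inl (ENNReal.natCast_ne_top N)), one_mul]
  exact_mod_cast Nat.sub_lt hN one_pos

section Words

variable {A : Type*}

/-- The event `E t` of the informal statement. -/
def prefixEvent (S : (t : ℕ) → Set (Fin t → A)) (t : ℕ) : Set (ℕ → A) :=
  {ω | (fun s : Fin t => ω s) ∈ S t}

def IsInsertionStable (S : (t : ℕ) → Set (Fin t → A)) : Prop :=
  ∀ t, 1 ≤ t → ∀ w ∈ S t, ∀ a b : ℕ, ∀ z : ℕ → A,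
    (∀ s : Fin t, z (a + (s : ℕ)) = w s) →
    (fun m : Fin (a + t + b) => z (m : ℕ)) ∈ S (a + t + b)

variable {S : (t : ℕ) → Set (Fin t → A)}

theorem IsInsertionStable.mem_prefixEvent (hS : IsInsertionStable S) {ω : ℕ → A} {a t m : ℕ}
    (ht : 1 ≤ t) (hm : a + t ≤ m) (hw : (fun s : Fin t => ω (a + s)) ∈ S t) :
    ω ∈ prefixEvent S m := by
  obtain ⟨b, rfl⟩ := Nat.exists_eq_add_of_le hm
  exact hS t ht _ hw a b ω fun _ => rfl

theorem IsInsertionStable.prefixEvent_subset (hS : IsInsertionStable S) {s u : ℕ}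
    (hs : 1 ≤ s) (hsu : s ≤ u) : prefixEvent S s ⊆ prefixEvent S u :=
  fun ω hω => hS.mem_prefixEvent (a := 0) hs (by omega) (by simp only [zero_add]; exact hω)

/-- The word of length `n * t` read as `n` consecutive blocks of length `t`. -/
def blocksEquiv (A : Type*) (n t : ℕ) : (Fin (n * t) → A) ≃ (Fin n → Fin t → A) :=
  (finProdFinEquiv.arrowCongr (Equiv.refl A)).symm.trans (Equiv.curry _ _ _)

theorem blocksEquiv_apply (u : Fin (n * t) → A) (k : Fin n) (r : Fin t) :
    blocksEquiv A n t u k r = u (finProdFinEquiv (k, r)) :=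
  rfl

def blockwise (B : Finset (Fin t → A)) (n : ℕ) : Finset (Fin (n * t) → A) :=
  (Fintype.piFinset fun _ : Fin n => B).map (blocksEquiv A n t).symm.toEmbedding

theorem card_blockwise (B : Finset (Fin t → A)) (n : ℕ) : (blockwise B n).card = B.card ^ n := by
  simp [blockwise]

theorem mem_blockwise {B : Finset (Fin t → A)} {u : Fin (n * t) → A} :
    u ∈ blockwise B n ↔ ∀ k, blocksEquiv A n t u k ∈ B := by
  simp [blockwise]

open Classical in
theorem IsInsertionStable.compl_prefixEvent_subset [Fintype A]
    (hS : IsInsertionStable S) {t : ℕ} (ht : 1 ≤ t) (n : ℕ) :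
    (prefixEvent S (n * t))ᶜ ⊆
      {ω | (fun s : Fin (n * t) => ω s) ∈ blockwise (S t)ᶜ.toFinset n} := by
  intro ω hω
  simp only [Set.mem_ofPred_eq, mem_blockwise, Set.mem_toFinset, Set.mem_compl_iff]
  intro k hk
  refine hω (hS.mem_prefixEvent (a := t * k) ht ?_ ?_)
  · nlinarith [k.isLt]
  · convert hk using 2 with r
    simp [blocksEquiv_apply, finProdFinEquiv, add_comm]

open Classical in
theorem card_compl_toFinset_le [Fintype A] {t : ℕ} (hne : (S t).Nonempty) :
    (S t)ᶜ.toFinset.card ≤ Fintype.card A ^ t - 1 := by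
  have hpos : 0 < (S t).toFinset.card := Finset.card_pos.2 (Set.toFinset_nonempty.2 hne)
  rw [Set.toFinset_compl, Finset.card_compl, Fintype.card_fun, Fintype.card_fin]
  omega

theorem IsInsertionStable.tendsto_measure_prefixEvent [MeasurableSpace A]
    (hS : IsInsertionStable S) (μ : Measure (ℕ → A)) :
    Tendsto (fun t => μ (prefixEvent S t)) atTop (nhds (⨆ n, μ (prefixEvent S (n + 1)))) :=
  (tendsto_add_atTop_iff_nat 1).1 <| tendsto_atTop_iSup <| monotone_nat_of_le_succ fun n =>
    measure_mono (hS.prefixEvent_subset (by omega) (by omega))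

end Words

section Measure

variable {A : Type*} [Fintype A] [MeasurableSpace A]

/-- The cylinder probabilities of the i.i.d. uniform measure. -/
def IsUniformOnCylinders (μ : Measure (ℕ → A)) : Prop :=
  ∀ (t : ℕ) (y : Fin t → A),
    μ {ω | ∀ s : Fin t, ω (s : ℕ) = y s} = (Fintype.card A : ℝ≥0∞)⁻¹ ^ t

variable {μ : Measure (ℕ → A)} {S : (t : ℕ) → Set (Fin t → A)}

/-- Only subadditivity is used, so no measurability of the events is needed. -/
theorem IsUniformOnCylinders.measure_prefix_mem_le (hμ : IsUniformOnCylinders μ) {m : ℕ}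
    (T : Finset (Fin m → A)) :
    μ {ω | (fun s : Fin m => ω s) ∈ T} ≤ T.card * (Fintype.card A : ℝ≥0∞)⁻¹ ^ m := by
  have hcover : {ω : ℕ → A | (fun s : Fin m => ω s) ∈ T} =
      ⋃ y ∈ T, {ω | ∀ s : Fin m, ω (s : ℕ) = y s} := by
    ext ω
    simp only [Set.mem_ofPred_eq, Set.mem_iUnion, exists_prop, ← funext_iff, exists_eq_right']
  calc μ {ω | (fun s : Fin m => ω s) ∈ T}
      ≤ ∑ y ∈ T, μ {ω | ∀ s : Fin m, ω (s : ℕ) = y s} := hcover ▸ measure_biUnion_finset_le _ _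
    _ = T.card * (Fintype.card A : ℝ≥0∞)⁻¹ ^ m := by
      simp only [hμ m, Finset.sum_const, nsmul_eq_mul]

theorem IsUniformOnCylinders.measure_compl_prefixEvent_le (hμ : IsUniformOnCylinders μ)
    (hS : IsInsertionStable S) {t : ℕ} (ht : 1 ≤ t) (hne : (S t).Nonempty) (n : ℕ) :
    μ (prefixEvent S (n * t))ᶜ ≤
      (((Fintype.card A ^ t - 1 : ℕ) : ℝ≥0∞) * (Fintype.card A : ℝ≥0∞)⁻¹ ^ t) ^ n := by
  classical
  calc μ (prefixEvent S (n * t))ᶜ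
      ≤ μ {ω | (fun s : Fin (n * t) => ω s) ∈ blockwise (S t)ᶜ.toFinset n} :=
        measure_mono (hS.compl_prefixEvent_subset ht n)
    _ ≤ (blockwise (S t)ᶜ.toFinset n).card * (Fintype.card A : ℝ≥0∞)⁻¹ ^ (n * t) :=
        hμ.measure_prefix_mem_le _
    _ = ((S t)ᶜ.toFinset.card * (Fintype.card A : ℝ≥0∞)⁻¹ ^ t) ^ n := by
        rw [card_blockwise, mul_pow, mul_comm n t, pow_mul, Nat.cast_pow]
    _ ≤ _ := by gcongr; exact_mod_cast card_compl_toFinset_le hne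

theorem IsUniformOnCylinders.iSup_measure_prefixEvent_eq_one [IsProbabilityMeasure μ]
    (hμ : IsUniformOnCylinders μ) (hS : IsInsertionStable S) {t : ℕ} (ht : 1 ≤ t)
    (hpos : 0 < μ (prefixEvent S t)) : ⨆ n, μ (prefixEvent S (n + 1)) = 1 := by
  set L := ⨆ n, μ (prefixEvent S (n + 1))
  have hne : (S t).Nonempty := by
    obtain ⟨ω, hω⟩ := nonempty_of_measure_ne_zero hpos.ne'
    exact ⟨_, hω⟩
  set q := ((Fintype.card A ^ t - 1 : ℕ) : ℝ≥0∞) * (Fintype.card A : ℝ≥0∞)⁻¹ ^ t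
  have hq : q < 1 := by
    simpa only [q, ← ENNReal.inv_pow, ← Nat.cast_pow] using
      ENNReal.natCast_sub_one_mul_inv_lt_one (Fintype.card A ^ t)
  have hbound : ∀ n, 1 ≤ n → 1 ≤ L + q ^ n := by
    intro n hn
    obtain ⟨k, hk⟩ := Nat.exists_eq_add_of_le' (Nat.mul_le_mul hn ht : 1 * 1 ≤ n * t)
    calc 1 = μ Set.univ := measure_univ.symm
      _ ≤ μ (prefixEvent S (n * t)) + μ (prefixEvent S (n * t))ᶜ := measure_univ_le_add_compl _
      _ ≤ L + q ^ n := add_le_add (hk ▸ le_iSup (fun k => μ (prefixEvent S (k + 1))) k)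
          (hμ.measure_compl_prefixEvent_le hS ht hne n)
  have hlim : Tendsto (fun n => L + q ^ n) atTop (nhds L) := by
    simpa using tendsto_const_nhds.add (ENNReal.tendsto_pow_atTop_nhds_zero_of_lt_one hq)
  exact le_antisymm (iSup_le fun _ => prob_le_one)
    (ge_of_tendsto hlim (eventually_atTop.2 ⟨1, hbound⟩))

end Measure

theorem zero_one_law_for_solving_general (A : Type) [Fintype A] [MeasurableSpace A]
    (μ : Measure (ℕ → A)) [IsProbabilityMeasure μ]
    (hμ : ∀ (t : ℕ) (y : Fin t → A),
      μ {ω | ∀ s : Fin t, ω (s : ℕ) = y s} = (Fintype.card A : ℝ≥0∞)⁻¹ ^ t)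
    (S : (t : ℕ) → Set (Fin t → A))
    (hS : ∀ t, 1 ≤ t → ∀ w ∈ S t, ∀ a b : ℕ, ∀ z : ℕ → A,
      (∀ s : Fin t, z (a + (s : ℕ)) = w s) →
      (fun m : Fin (a + t + b) => z (m : ℕ)) ∈ S (a + t + b)) :
    (∀ t, 1 ≤ t →
      {ω : ℕ → A | (fun s : Fin t => ω (s : ℕ)) ∈ S t} ⊆
        {ω : ℕ → A | (fun s : Fin (t + 1) => ω (s : ℕ)) ∈ S (t + 1)}) ∧
    ∃ L : ℝ≥0∞,
      Tendsto (fun t : ℕ => μ {ω | (fun s : Fin t => ω (s : ℕ)) ∈ S t}) atTop (nhds L) ∧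
      (L = 0 ∨ L = 1) ∧
      (L = 1 ↔ ∃ t, 1 ≤ t ∧ 0 < μ {ω | (fun s : Fin t => ω (s : ℕ)) ∈ S t}) := by
  have hS : IsInsertionStable S := hS
  have hμ : IsUniformOnCylinders μ := hμ
  refine ⟨fun t ht => hS.prefixEvent_subset ht t.le_succ, _, hS.tendsto_measure_prefixEvent μ, ?_⟩
  by_cases hpos : ∃ t, 1 ≤ t ∧ 0 < μ (prefixEvent S t)
  · obtain ⟨t, ht, htpos⟩ := hpos
    have hL := hμ.iSup_measure_prefixEvent_eq_one hS ht htpos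
    exact ⟨.inr hL, fun _ => ⟨t, ht, htpos⟩, fun _ => hL⟩
  · have hL : ⨆ n, μ (prefixEvent S (n + 1)) = 0 :=
      ENNReal.iSup_eq_zero.2 fun n =>
        by_contra fun h => hpos ⟨n + 1, n.succ_pos, pos_iff_ne_zero.2 h⟩
    exact ⟨.inl hL, iff_of_false (fun h => zero_ne_one (hL.symm.trans h)) hpos⟩

/-- **Zero–one lemma.** Let `μ` be the i.i.d. uniform product measure on `ℕ → A` (characterized
by its cylinder probabilities `hμ`) over a nonempty finite type `A`. For `t ≥ 1` let `S t` be
a set of words of length `t`, stable under insertion into longer words (`hS`: if the window of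
length `t` starting at position `a` of `z` is a word of `S t`, then the length-`(a+t+b)` prefix
of `z` is in `S (a+t+b)`). Then the events `E t` are nondecreasing for `t ≥ 1`, `μ (E t)` has a
limit `L ∈ {0,1}`, and `L = 1` iff `μ (E t) > 0` for some `t ≥ 1`. -/
theorem zero_one_law_for_solving (A : Type) [Fintype A] [Nonempty A] [MeasurableSpace A]
    (μ : Measure (ℕ → A)) [IsProbabilityMeasure μ]
    (hμ : ∀ (t : ℕ) (y : Fin t → A),
      μ {ω | ∀ s : Fin t, ω (s : ℕ) = y s} = (Fintype.card A : ℝ≥0∞)⁻¹ ^ t)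
    (S : (t : ℕ) → Set (Fin t → A))
    (hS : ∀ t, 1 ≤ t → ∀ w ∈ S t, ∀ a b : ℕ, ∀ z : ℕ → A,
      (∀ s : Fin t, z (a + (s : ℕ)) = w s) →
      (fun m : Fin (a + t + b) => z (m : ℕ)) ∈ S (a + t + b)) :
    (∀ t, 1 ≤ t →
      {ω : ℕ → A | (fun s : Fin t => ω (s : ℕ)) ∈ S t} ⊆
        {ω : ℕ → A | (fun s : Fin (t + 1) => ω (s : ℕ)) ∈ S (t + 1)}) ∧
    ∃ L : ℝ≥0∞,
      Tendsto (fun t : ℕ => μ {ω | (fun s : Fin t => ω (s : ℕ)) ∈ S t}) atTop (nhds L) ∧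
      (L = 0 ∨ L = 1) ∧
      (L = 1 ↔ ∃ t, 1 ≤ t ∧ 0 < μ {ω | (fun s : Fin t => ω (s : ℕ)) ∈ S t}) :=
  zero_one_law_for_solving_general A μ hμ S hS
end

section
/- For every n ≥ 1, every x : Fin n → ℕ → Bool, every t ∈ ℕ and all i, j ∈ Fin n: K^x i t = K^x j t if and only if x i s = x j s for every s < t. (This is the paper's claim that in the blackboard model, equality of randomness is equivalent to equality of knowledge.) -/
open MeasureTheory Filter
open scoped ENNReal

/-- In the blackboard model, equality of knowledge is equivalent to equality of randomness:
`K^x i t = K^x j t` iff `x i s = x j s` for all `s < t`. -/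
theorem blackboard_knowledge_eq_iff_randomness_eq (n : ℕ) (hn : 1 ≤ n)
    (x : Fin n → ℕ → Bool) (t : ℕ) (i j : Fin n) :
    bbK x i t = bbK x j t ↔ ∀ s, s < t → x i s = x j s := by
  induction t with
  | zero =>
    simp only [Nat.not_lt_zero, false_implies, implies_true, iff_true]
    rfl
  | succ t ih =>
    constructor
    · intro h
      have h' : ((bbK x i t, x i t, (Finset.univ.erase i).val.map (fun k => bbK x k t)) :
          BBW t × Bool × Multiset (BBW t))
          = (bbK x j t, x j t, (Finset.univ.erase j).val.map (fun k => bbK x k t)) := h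
      rw [Prod.mk.injEq, Prod.mk.injEq] at h'
      obtain ⟨h1, h2, _⟩ := h'
      intro s hs
      rcases Nat.lt_succ_iff_lt_or_eq.mp hs with hs | rfl
      · exact (ih.mp h1) s hs
      · exact h2
    · intro h
      have h1 : bbK x i t = bbK x j t :=
        ih.mpr (fun s hs => h s (hs.trans (Nat.lt_succ_self t)))
      have h2 : x i t = x j t := h t (Nat.lt_succ_self t)
      show ((bbK x i t, x i t, (Finset.univ.erase i).val.map (fun k => bbK x k t)) :
          BBW t × Bool × Multiset (BBW t))
          = (bbK x j t, x j t, (Finset.univ.erase j).val.map (fun k => bbK x k t))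
      refine Prod.ext h1 (Prod.ext h2 ?_)
      set f : Fin n → BBW t := fun k => bbK x k t with hf
      have hcons : ∀ k : Fin n,
          f k ::ₘ Multiset.map f ((Finset.univ.erase k).val)
            = Multiset.map f Finset.univ.val := by
        intro k
        rw [Finset.erase_val, ← Multiset.map_cons,
          Multiset.cons_erase (Finset.mem_val.mpr (Finset.mem_univ k))]
      have hi := hcons i
      have hj := hcons j
      have hfij : f i = f j := h1
      rw [hfij] at hi
      rw [← hj] at hi
      exact (Multiset.cons_inj_right _).mp hi
end

section
/- Let α : Fin n → Fin k be a surjective randomness configuration all of whose fibers have cardinality at least 2. Then for every x : Fin n → ℕ → Bool compatible with α, every t ∈ ℕ and every i ∈ Fin n, there exists l ≠ i with K^x l t = K^x i t (blackboard knowledge); consequently no state compatible with α solves leader election, and with X i = R (α i) for R distributed according to μ, μ({R : ∃ i, ∀ l ≠ i, K^X l t ≠ K^X i t}) = 0 for every t. (This is the 'only if' direction of the paper's blackboard theorem: if no source is connected to exactly one party, leader election is not eventually solvable on the blackboard.) -/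
open MeasureTheory Filter
open scoped ENNReal

lemma bbK_eq_of_fiber {n k : ℕ} (α : Fin n → Fin k) (x : Fin n → ℕ → Bool)
    (hx : ∀ i j, α i = α j → x i = x j) :
    ∀ (t : ℕ) (i j : Fin n), α i = α j → bbK x i t = bbK x j t := by
  intro t
  induction t with
  | zero => intro i j _; rfl
  | succ t ih =>
    intro i j hij
    by_cases h : i = j
    · subst h; rfl
    set f : Fin n → BBW t := fun l => bbK x l t with hf
    have hfij : f i = f j := ih i j hij
    have h1 : f i ::ₘ Multiset.map f ((Finset.univ : Finset (Fin n)).val.erase i)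
        = Multiset.map f (Finset.univ : Finset (Fin n)).val := by
      rw [← Multiset.map_cons, Multiset.cons_erase (Finset.mem_univ i)]
    have h2 : f j ::ₘ Multiset.map f ((Finset.univ : Finset (Fin n)).val.erase j)
        = Multiset.map f (Finset.univ : Finset (Fin n)).val := by
      rw [← Multiset.map_cons, Multiset.cons_erase (Finset.mem_univ j)]
    have hms : Multiset.map f ((Finset.univ : Finset (Fin n)).val.erase i)
        = Multiset.map f ((Finset.univ : Finset (Fin n)).val.erase j) := by
      have := h1.trans h2.symm
      rw [hfij] at this
      exact (Multiset.cons_inj_right _).mp this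
    show (bbK x i t, x i t, ((Finset.univ.erase i).val).map (fun l => bbK x l t))
        = (bbK x j t, x j t, ((Finset.univ.erase j).val).map (fun l => bbK x l t))
    rw [ih i j hij, hx i j hij]
    have : ((Finset.univ.erase i).val).map (fun l => bbK x l t)
        = ((Finset.univ.erase j).val).map (fun l => bbK x l t) := by
      simpa [Finset.erase_val] using hms
    rw [this]

/-- **Blackboard 'only if' direction.** If every fiber of the surjective configuration `α`
has at least two parties, then for every `x` compatible with `α` every node's blackboard
knowledge coincides with that of some other node at every time; consequently, with
`X i = R (α i)` and `μ` the product of fair-coin measures, the probability of solving leader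
election at time `t` is `0` for every `t`. -/
theorem blackboard_no_singleton_source_impossible (n k : ℕ) (hn : 1 ≤ n) (hk : 1 ≤ k)
    (α : Fin n → Fin k) (hα : Function.Surjective α)
    (hfib : ∀ c : Fin k, 2 ≤ (Finset.univ.filter (fun i : Fin n => α i = c)).card)
    (μ : Measure (Fin k → ℕ → Bool)) [IsProbabilityMeasure μ]
    (hμ : ∀ (t : ℕ) (y : Fin k → Fin t → Bool),
      μ {R | ∀ (c : Fin k) (s : Fin t), R c (s : ℕ) = y c s} = (2 : ℝ≥0∞)⁻¹ ^ (k * t)) :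
    (∀ x : Fin n → ℕ → Bool, (∀ i j, α i = α j → x i = x j) →
      ∀ (t : ℕ) (i : Fin n), ∃ l : Fin n, l ≠ i ∧ bbK x l t = bbK x i t) ∧
    (∀ t : ℕ, μ {R | ∃ i : Fin n, ∀ l : Fin n, l ≠ i →
        bbK (fun i' => R (α i')) l t ≠ bbK (fun i' => R (α i')) i t} = 0) := by
  have main : ∀ x : Fin n → ℕ → Bool, (∀ i j, α i = α j → x i = x j) →
      ∀ (t : ℕ) (i : Fin n), ∃ l : Fin n, l ≠ i ∧ bbK x l t = bbK x i t := by
    intro x hx t i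
    have hcard := hfib (α i)
    have : ∃ l ∈ Finset.univ.filter (fun j : Fin n => α j = α i), l ≠ i := by
      by_contra hcon
      push_neg at hcon
      have hsub : Finset.univ.filter (fun j : Fin n => α j = α i) ⊆ {i} := by
        intro l hl; simp [hcon l hl]
      have := Finset.card_le_card hsub
      simp at this
      omega
    obtain ⟨l, hl, hli⟩ := this
    simp only [Finset.mem_filter] at hl
    exact ⟨l, hli, bbK_eq_of_fiber α x hx t l i hl.2⟩
  refine ⟨main, fun t => ?_⟩
  convert measure_empty
  · ext R
    simp only [Set.mem_setOf_eq, Set.mem_empty_iff_false, iff_false, not_exists]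
    intro i hi
    obtain ⟨l, hli, hle⟩ := main (fun i' => R (α i'))
      (fun i j h => by simp [h]) t i
    exact hi l hli hle
  · infer_instance
end

section
/- Let α : Fin n → Fin k be a surjective randomness configuration, k ≥ 1, and suppose some fiber is a singleton: α⁻¹(c₀) = {i₀}. With X i = R (α i) for R distributed according to μ, for every t ≥ 1 (blackboard knowledge): μ({R : ∀ l ≠ i₀, K^X l t ≠ K^X i₀ t}) = (1 − 2^{−t})^{k−1}; hence μ({R : ∃ i, ∀ l ≠ i, K^X l t ≠ K^X i t}) ≥ 1 − (k−1)·2^{−t}, which tends to 1 as t → ∞. (This is the 'if' direction of the paper's blackboard theorem: if some source is connected to exactly one party, leader election is eventually solvable.) -/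
open MeasureTheory Filter
open scoped ENNReal

/-!
Two nodes have equal blackboard knowledge at time `t` exactly when they received the same bits in
the first `t` rounds, so the event "`i₀` is distinguished" only depends on the length-`t` prefixes
of the sources, and, because `c₀` feeds `i₀` alone and every other source feeds some node, it says
that the prefix of `c₀` differs from the prefix of every other source. Counting these prefix
configurations gives `2^t (2^t - 1)^(k-1)` out of `2^(kt)`, i.e. probability `(1 - 2^{-t})^(k-1)`;
Bernoulli's inequality then gives the lower bound, which tends to `1`.
-/

lemma bbK_eq_iff {n : ℕ} (x : Fin n → ℕ → Bool) (l i : Fin n) (t : ℕ) :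
    bbK x l t = bbK x i t ↔ ∀ s < t, x l s = x i s := by
  classical
  induction t with
  | zero => simp only [Nat.not_lt_zero, false_imp_iff, imp_true_iff, iff_true]; rfl
  | succ t ih =>
    have hothers : bbK x l t = bbK x i t →
        (Finset.univ.erase l).val.map (bbK x · t)
          = (Finset.univ.erase i).val.map (bbK x · t) := by
      intro h
      rw [Finset.erase_val, Finset.erase_val,
        Multiset.map_erase_of_mem _ _ (Finset.mem_univ_val l),
        Multiset.map_erase_of_mem _ _ (Finset.mem_univ_val i), h]
    show ((bbK x l t, x l t, _) : BBW t × Bool × Multiset (BBW t)) = (bbK x i t, x i t, _) ↔ _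
    simp only [Prod.mk.injEq, Nat.lt_succ_iff_lt_or_eq, or_imp, forall_and, forall_eq, ih]
    exact ⟨fun h => ⟨h.1, h.2.1⟩, fun h => ⟨h.1, h.2, hothers (ih.2 h.1)⟩⟩

def Equiv.subtypeForallNeApply {ι β : Type*} [DecidableEq ι] (c₀ : ι) :
    {y : ι → β // ∀ c ≠ c₀, y c ≠ y c₀} ≃ Σ z : β, ({c // c ≠ c₀} → {b // b ≠ z}) where
  toFun y := ⟨y.1 c₀, fun c => ⟨y.1 c, y.2 c c.2⟩⟩
  invFun g := ⟨fun c => if h : c = c₀ then g.1 else g.2 ⟨c, h⟩,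
    fun c hc => by simpa [hc] using (g.2 ⟨c, hc⟩).2⟩
  left_inv y := by
    ext c
    by_cases h : c = c₀ <;> simp [h]
  right_inv := by
    rintro ⟨z, g⟩
    have sigma_eq : ∀ (a : β) (f : {c // c ≠ c₀} → {b // b ≠ a}), a = z →
        (∀ c, (f c : β) = g c) → (⟨a, f⟩ : Σ z : β, ({c // c ≠ c₀} → {b // b ≠ z})) = ⟨z, g⟩ := by
      rintro a f rfl hf
      exact Sigma.ext rfl (heq_of_eq (funext fun c => Subtype.ext (hf c)))
    exact sigma_eq _ _ (dif_pos rfl) fun c => dif_neg c.2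

lemma Nat.card_subtype_forall_ne_apply {ι β : Type*} [Fintype ι] [DecidableEq ι] [Fintype β]
    [DecidableEq β] (c₀ : ι) :
    Nat.card {y : ι → β // ∀ c ≠ c₀, y c ≠ y c₀}
      = Fintype.card β * (Fintype.card β - 1) ^ (Fintype.card ι - 1) := by
  rw [Nat.card_congr (Equiv.subtypeForallNeApply c₀), Nat.card_eq_fintype_card]
  simp [Fintype.card_sigma, Fintype.card_subtype_compl]

def bitPrefix {k : ℕ} (t : ℕ) (R : Fin k → ℕ → Bool) : Fin k → Fin t → Bool :=
  fun c s => R c s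

lemma measurable_bitPrefix {k : ℕ} (t : ℕ) :
    Measurable (bitPrefix t : (Fin k → ℕ → Bool) → Fin k → Fin t → Bool) := by
  unfold bitPrefix; fun_prop

lemma measure_bitPrefix_preimage {k : ℕ} {μ : Measure (Fin k → ℕ → Bool)}
    (hμ : ∀ (t : ℕ) (y : Fin k → Fin t → Bool),
      μ {R | ∀ (c : Fin k) (s : Fin t), R c (s : ℕ) = y c s} = (2 : ℝ≥0∞)⁻¹ ^ (k * t))
    (t : ℕ) (S : Set (Fin k → Fin t → Bool)) :
    μ (bitPrefix t ⁻¹' S) = Nat.card S * (2 : ℝ≥0∞)⁻¹ ^ (k * t) := by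
  have hfiber : ∀ y, bitPrefix t ⁻¹' {y}
      = {R | ∀ (c : Fin k) (s : Fin t), R c (s : ℕ) = y c s} := by
    intro y; ext R; simp [bitPrefix, funext_iff]
  lift S to Finset (Fin k → Fin t → Bool) using S.toFinite
  rw [← sum_measure_preimage_singleton S
    fun y _ => measurable_bitPrefix t (measurableSet_singleton y)]
  simp [hfiber, hμ]

lemma ENNReal.one_sub_mul_le_one_sub_pow (a : ℝ≥0∞) (m : ℕ) : 1 - m * a ≤ (1 - a) ^ m := by
  induction m with
  | zero => simp
  | succ m ih =>
    have hpow_ne_top : (1 - a) ^ m ≠ ∞ := by simp [ENNReal.pow_eq_top_iff]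
    calc 1 - ((m + 1 : ℕ) : ℝ≥0∞) * a = 1 - m * a - a := by
          rw [Nat.cast_succ, add_one_mul, tsub_add_eq_tsub_tsub]
      _ ≤ (1 - a) ^ m - (1 - a) ^ m * a :=
          tsub_le_tsub ih (mul_le_of_le_one_left zero_le (pow_le_one' tsub_le_self m))
      _ = (1 - a) ^ (m + 1) := by
          rw [pow_succ, ENNReal.mul_sub fun _ _ => hpow_ne_top, mul_one]

lemma ENNReal.natCast_mul_pow_mul_inv_pow {N : ℕ} (hN : N ≠ 0) (m : ℕ) :
    ((N * (N - 1) ^ m : ℕ) : ℝ≥0∞) * (N : ℝ≥0∞)⁻¹ ^ (m + 1) = (1 - (N : ℝ≥0∞)⁻¹) ^ m := by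
  have hNN : (N : ℝ≥0∞) * (N : ℝ≥0∞)⁻¹ = 1 :=
    ENNReal.mul_inv_cancel (by exact_mod_cast hN) (ENNReal.natCast_ne_top N)
  have hsub : ((N - 1 : ℕ) : ℝ≥0∞) * (N : ℝ≥0∞)⁻¹ = 1 - (N : ℝ≥0∞)⁻¹ := by
    rw [ENNReal.natCast_sub, Nat.cast_one,
      ENNReal.sub_mul fun _ _ => ENNReal.inv_ne_top.2 (by exact_mod_cast hN), hNN, one_mul]
  rw [← hsub]
  push_cast
  calc (N : ℝ≥0∞) * ((N : ℝ≥0∞) - 1) ^ m * (N : ℝ≥0∞)⁻¹ ^ (m + 1)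
      = (N * (N : ℝ≥0∞)⁻¹) * (((N : ℝ≥0∞) - 1) * (N : ℝ≥0∞)⁻¹) ^ m := by ring
    _ = _ := by rw [hNN, one_mul]

lemma tendsto_one_sub_mul_inv_two_pow (c : ℕ) :
    Tendsto (fun t : ℕ => 1 - (c : ℝ≥0∞) * (2 : ℝ≥0∞)⁻¹ ^ t) atTop (nhds 1) := by
  have hpow : Tendsto (fun t : ℕ => (2 : ℝ≥0∞)⁻¹ ^ t) atTop (nhds 0) :=
    ENNReal.tendsto_pow_atTop_nhds_zero_of_lt_one (ENNReal.inv_lt_one.2 ENNReal.one_lt_two)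
  simpa using ENNReal.Tendsto.sub tendsto_const_nhds
    (ENNReal.Tendsto.const_mul hpow (Or.inr (ENNReal.natCast_ne_top c)))
    (Or.inl ENNReal.one_ne_top)

lemma measure_bbK_ne_of_fiber_eq_singleton {n k : ℕ} {α : Fin n → Fin k}
    (hα : Function.Surjective α) {c₀ : Fin k} {i₀ : Fin n}
    (hfib : {i : Fin n | α i = c₀} = {i₀}) {μ : Measure (Fin k → ℕ → Bool)}
    (hμ : ∀ (t : ℕ) (y : Fin k → Fin t → Bool),
      μ {R | ∀ (c : Fin k) (s : Fin t), R c (s : ℕ) = y c s} = (2 : ℝ≥0∞)⁻¹ ^ (k * t))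
    (t : ℕ) :
    μ {R | ∀ l : Fin n, l ≠ i₀ →
        bbK (fun i' => R (α i')) l t ≠ bbK (fun i' => R (α i')) i₀ t}
      = (1 - (2 : ℝ≥0∞)⁻¹ ^ t) ^ (k - 1) := by
  have hfiber_iff : ∀ l, α l = c₀ ↔ l = i₀ := fun l => Set.ext_iff.1 hfib l
  have hset : {R : Fin k → ℕ → Bool | ∀ l : Fin n, l ≠ i₀ →
        bbK (fun i' => R (α i')) l t ≠ bbK (fun i' => R (α i')) i₀ t}
      = bitPrefix t ⁻¹' {y | ∀ c ≠ c₀, y c ≠ y c₀} := by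
    ext R
    simp only [Set.mem_ofPred_eq, Set.mem_preimage, hα.forall, ← (hfiber_iff _).not,
      (hfiber_iff i₀).2 rfl, bbK_eq_iff, bitPrefix, ne_eq, funext_iff, Fin.forall_iff]
  obtain ⟨m, rfl⟩ := Nat.exists_eq_add_one_of_ne_zero c₀.pos.ne'
  rw [hset, measure_bitPrefix_preimage hμ, Set.coe_ofPred, Nat.card_subtype_forall_ne_apply]
  simp only [Fintype.card_fin, Fintype.card_fun, Fintype.card_bool, add_tsub_cancel_right]
  rw [mul_comm (m + 1) t, pow_mul, ← ENNReal.inv_pow]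
  exact_mod_cast ENNReal.natCast_mul_pow_mul_inv_pow (pow_ne_zero t two_ne_zero) m

theorem blackboard_singleton_source_solvable_general (n k : ℕ)
    (α : Fin n → Fin k) (hα : Function.Surjective α)
    (c₀ : Fin k) (i₀ : Fin n) (hfib : {i : Fin n | α i = c₀} = {i₀})
    (μ : Measure (Fin k → ℕ → Bool)) [IsProbabilityMeasure μ]
    (hμ : ∀ (t : ℕ) (y : Fin k → Fin t → Bool),
      μ {R | ∀ (c : Fin k) (s : Fin t), R c (s : ℕ) = y c s} = (2 : ℝ≥0∞)⁻¹ ^ (k * t)) :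
    (∀ t : ℕ, 1 ≤ t →
      μ {R | ∀ l : Fin n, l ≠ i₀ →
          bbK (fun i' => R (α i')) l t ≠ bbK (fun i' => R (α i')) i₀ t}
        = (1 - (2 : ℝ≥0∞)⁻¹ ^ t) ^ (k - 1)) ∧
    (∀ t : ℕ, 1 ≤ t →
      μ {R | ∃ i : Fin n, ∀ l : Fin n, l ≠ i →
          bbK (fun i' => R (α i')) l t ≠ bbK (fun i' => R (α i')) i t}
        ≥ 1 - ((k - 1 : ℕ) : ℝ≥0∞) * (2 : ℝ≥0∞)⁻¹ ^ t) ∧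
    Tendsto
      (fun t : ℕ => μ {R | ∃ i : Fin n, ∀ l : Fin n, l ≠ i →
        bbK (fun i' => R (α i')) l t ≠ bbK (fun i' => R (α i')) i t})
      atTop (nhds 1) := by
  have hsingle := measure_bbK_ne_of_fiber_eq_singleton hα hfib hμ
  have hlower : ∀ t : ℕ, 1 - ((k - 1 : ℕ) : ℝ≥0∞) * (2 : ℝ≥0∞)⁻¹ ^ t
      ≤ μ {R | ∃ i : Fin n, ∀ l : Fin n, l ≠ i →
          bbK (fun i' => R (α i')) l t ≠ bbK (fun i' => R (α i')) i t} := fun t =>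
    calc _ ≤ (1 - (2 : ℝ≥0∞)⁻¹ ^ t) ^ (k - 1) := ENNReal.one_sub_mul_le_one_sub_pow _ _
      _ = μ _ := (hsingle t).symm
      _ ≤ _ := measure_mono fun _ hR => by exact ⟨i₀, hR⟩
  refine ⟨fun t _ => hsingle t, fun t _ => hlower t, ?_⟩
  exact tendsto_of_tendsto_of_tendsto_of_le_of_le (tendsto_one_sub_mul_inv_two_pow (k - 1))
    tendsto_const_nhds hlower fun _ => prob_le_one

/-- **Blackboard 'if' direction.** If the fiber of some source `c₀` is the singleton `{i₀}`,
then with `X i = R (α i)` and `μ` the product of fair-coin measures: for every `t ≥ 1` the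
probability that `i₀`'s blackboard knowledge differs from all other nodes' equals
`(1 - 2^{-t})^(k-1)`, hence the probability of solving leader election at time `t` is at least
`1 - (k-1)·2^{-t}`, which tends to `1` as `t → ∞`. -/
theorem blackboard_singleton_source_solvable (n k : ℕ) (hn : 1 ≤ n) (hk : 1 ≤ k)
    (α : Fin n → Fin k) (hα : Function.Surjective α)
    (c₀ : Fin k) (i₀ : Fin n) (hfib : {i : Fin n | α i = c₀} = {i₀})
    (μ : Measure (Fin k → ℕ → Bool)) [IsProbabilityMeasure μ]
    (hμ : ∀ (t : ℕ) (y : Fin k → Fin t → Bool),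
      μ {R | ∀ (c : Fin k) (s : Fin t), R c (s : ℕ) = y c s} = (2 : ℝ≥0∞)⁻¹ ^ (k * t)) :
    (∀ t : ℕ, 1 ≤ t →
      μ {R | ∀ l : Fin n, l ≠ i₀ →
          bbK (fun i' => R (α i')) l t ≠ bbK (fun i' => R (α i')) i₀ t}
        = (1 - (2 : ℝ≥0∞)⁻¹ ^ t) ^ (k - 1)) ∧
    (∀ t : ℕ, 1 ≤ t →
      μ {R | ∃ i : Fin n, ∀ l : Fin n, l ≠ i →
          bbK (fun i' => R (α i')) l t ≠ bbK (fun i' => R (α i')) i t}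
        ≥ 1 - ((k - 1 : ℕ) : ℝ≥0∞) * (2 : ℝ≥0∞)⁻¹ ^ t) ∧
    Tendsto
      (fun t : ℕ => μ {R | ∃ i : Fin n, ∀ l : Fin n, l ≠ i →
        bbK (fun i' => R (α i')) l t ≠ bbK (fun i' => R (α i')) i t})
      atTop (nhds 1) :=
  blackboard_singleton_source_solvable_general n k α hα c₀ i₀ hfib μ hμ
end

section
/- Let n ≥ 2 and g ≥ 1 with g ∣ n, and define P_g(i)(j) = ((i + j) mod g + g·⌊i/g⌋ + g·⌊j/g⌋) mod n for i ∈ {0,…,n−1} and j ∈ {1,…,n−1}. Then for every i, the map j ↦ P_g(i)(j) is injective on {1,…,n−1} and satisfies P_g(i)(j) ≠ i for all j ∈ {1,…,n−1}; hence for each i it is a bijection from {1,…,n−1} onto {0,…,n−1} ∖ {i}, so P_g is a valid port assignment for the clique on n nodes. (This verifies that the port numbering constructed in the proof of the paper's Lemma 5 is well defined.) -/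
open MeasureTheory Filter
open scoped ENNReal

theorem shift_lt {n g i : ℕ} (hg : 0 < g) (hgn : g ∣ n) (hi : i < n) :
    g * (i / g) + ((i % g + 1) % g) < n := by
  have h1 : (i % g + 1) % g < g := Nat.mod_lt _ hg
  have h2 : i / g < n / g := Nat.div_lt_div_of_lt_of_dvd hgn hi
  calc g * (i / g) + ((i % g + 1) % g)
      < g * (i / g) + g := by omega
    _ = g * (i / g + 1) := (Nat.mul_succ g _).symm
    _ ≤ g * (n / g) := Nat.mul_le_mul_left _ h2
    _ = n := Nat.mul_div_cancel' hgn

/-- The shift permutation `f` of Lemma 5: `f i = g⌊i/g⌋ + ((i mod g + 1) mod g)`. -/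
def shiftF (n g : ℕ) (hg : 0 < g) (hgn : g ∣ n) : Fin n → Fin n :=
  fun i => ⟨g * ((i : ℕ) / g) + (((i : ℕ) % g + 1) % g), shift_lt hg hgn i.isLt⟩

/-- The port assignment `P_g` of Lemma 5: node `i`'s port `j ∈ {1,…,n-1}` (represented by
`j : Fin (n-1)`, standing for the port number `(j : ℕ) + 1`) is connected to node
`((i + j) mod g + g⌊i/g⌋ + g⌊j/g⌋) mod n`. -/
def portG (n g : ℕ) (hn : 0 < n) : Fin n → Fin (n - 1) → Fin n :=
  fun i j =>
    ⟨(((i : ℕ) + ((j : ℕ) + 1)) % g + g * ((i : ℕ) / g) + g * (((j : ℕ) + 1) / g)) % n,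
      Nat.mod_lt _ hn⟩


lemma portVal_eq (n g i j : ℕ) (hg : 0 < g) (hgn : g ∣ n) (hn : 0 < n) :
    ((i + j) % g + g * (i / g) + g * (j / g)) % n
      = (i + j) % g + g * ((i / g + j / g) % (n / g)) := by
  obtain ⟨q, rfl⟩ := hgn
  have hq : 0 < q := Nat.pos_of_mul_pos_left (a := g) (by omega)
  rw [Nat.mul_div_cancel_left _ hg]
  set A := (i + j) % g with hA
  set B := i / g + j / g with hB
  have hAlt : A < g := Nat.mod_lt _ hg
  have hBq : B % q < q := Nat.mod_lt _ hq
  have h1 : A + g * (i / g) + g * (j / g) = (A + g * (B % q)) + (g * q) * (B / q) := by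
    have := Nat.mod_add_div B q
    calc A + g * (i / g) + g * (j / g) = A + g * B := by rw [hB]; ring
      _ = A + g * (B % q + q * (B / q)) := by rw [this]
      _ = (A + g * (B % q)) + (g * q) * (B / q) := by ring
  rw [h1, Nat.add_mul_mod_self_left, Nat.mod_eq_of_lt]
  calc A + g * (B % q) < g + g * (B % q) := by omega
    _ = g * (B % q + 1) := by ring
    _ ≤ g * q := Nat.mul_le_mul_left _ (by omega)

lemma portVal_mod (n g i j : ℕ) (hg : 0 < g) (hgn : g ∣ n) (hn : 0 < n) :
    ((i + j) % g + g * (i / g) + g * (j / g)) % n % g = (i + j) % g := by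
  rw [portVal_eq n g i j hg hgn hn, Nat.add_mul_mod_self_left,
    Nat.mod_eq_of_lt (Nat.mod_lt _ hg)]

lemma portVal_div (n g i j : ℕ) (hg : 0 < g) (hgn : g ∣ n) (hn : 0 < n) :
    ((i + j) % g + g * (i / g) + g * (j / g)) % n / g = (i / g + j / g) % (n / g) := by
  rw [portVal_eq n g i j hg hgn hn, Nat.add_mul_div_left _ _ hg,
    Nat.div_eq_of_lt (Nat.mod_lt _ hg), Nat.zero_add]

/-- The port numbering `P_g` of Lemma 5 is a valid port assignment for the `n`-clique: for
every node `i` the map `j ↦ P_g i j` is injective, never equals `i`, and hits every node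
`m ≠ i` (hence is a bijection from the ports `{1,…,n-1}` onto `{0,…,n-1} \ {i}`). -/
theorem portG_is_port_assignment (n g : ℕ) (hn : 2 ≤ n) (hg : 0 < g) (hgn : g ∣ n) :
    ∀ i : Fin n,
      Function.Injective (portG n g (by omega) i) ∧
      (∀ j : Fin (n - 1), portG n g (by omega) i j ≠ i) ∧
      (∀ m : Fin n, m ≠ i → ∃ j : Fin (n - 1), portG n g (by omega) i j = m) := by
  intro i
  have hn0 : 0 < n := by omega
  have hq0 : 0 < n / g := Nat.div_pos (Nat.le_of_dvd (by omega) hgn) hg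
  -- injectivity
  have hinj : Function.Injective (portG n g (by omega) i) := by
    intro j1 j2 hjj
    have h := congrArg Fin.val hjj
    simp only [portG] at h
    set x := (j1 : ℕ) + 1 with hx
    set y := (j2 : ℕ) + 1 with hy
    have hxn : x < n := by have := j1.isLt; omega
    have hyn : y < n := by have := j2.isLt; omega
    have hm : ((i : ℕ) + x) % g = ((i : ℕ) + y) % g := by
      have := portVal_mod n g i x hg hgn hn0
      have h2 := portVal_mod n g i y hg hgn hn0
      rw [← this, ← h2, h]
    have hd : ((i : ℕ) / g + x / g) % (n / g) = ((i : ℕ) / g + y / g) % (n / g) := by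
      have := portVal_div n g i x hg hgn hn0
      have h2 := portVal_div n g i y hg hgn hn0
      rw [← this, ← h2, h]
    have hm' : x % g = y % g := (Nat.ModEq.add_left_cancel' (i : ℕ) hm)
    have hd' : x / g % (n / g) = y / g % (n / g) :=
      Nat.ModEq.add_left_cancel' ((i : ℕ) / g) hd
    have hxq : x / g < n / g := Nat.div_lt_div_of_lt_of_dvd hgn hxn
    have hyq : y / g < n / g := Nat.div_lt_div_of_lt_of_dvd hgn hyn
    have hd'' : x / g = y / g := by
      rwa [Nat.mod_eq_of_lt hxq, Nat.mod_eq_of_lt hyq] at hd'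
    have hxy : x = y := by
      rw [← Nat.div_add_mod x g, ← Nat.div_add_mod y g, hd'', hm']
    exact Fin.ext (by omega)
  -- never hits i
  have hne : ∀ j : Fin (n - 1), portG n g (by omega) i j ≠ i := by
    intro j hji
    have h := congrArg Fin.val hji
    simp only [portG] at h
    set x := (j : ℕ) + 1 with hx
    have hxn : x < n := by have := j.isLt; omega
    have hm : ((i : ℕ) + x) % g = (i : ℕ) % g := by
      have := portVal_mod n g i x hg hgn hn0
      rw [← this, h]
    have hd : ((i : ℕ) / g + x / g) % (n / g) = (i : ℕ) / g := by
      have := portVal_div n g i x hg hgn hn0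
      rw [← this, h]
    have hm0 : x % g = 0 := by
      have : ((i : ℕ) + x) % g = ((i : ℕ) + 0) % g := by simpa using hm
      have := Nat.ModEq.add_left_cancel' (i : ℕ) this
      simpa [Nat.ModEq] using this
    have hiq : (i : ℕ) / g < n / g := Nat.div_lt_div_of_lt_of_dvd hgn i.isLt
    have hd0 : x / g = 0 := by
      have hd2 : ((i : ℕ) / g + x / g) % (n / g) = ((i : ℕ) / g + 0) % (n / g) := by
        rw [hd]; simp [Nat.mod_eq_of_lt hiq]
      have := Nat.ModEq.add_left_cancel' ((i : ℕ) / g) hd2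
      have hxq : x / g < n / g := Nat.div_lt_div_of_lt_of_dvd hgn hxn
      simpa [Nat.ModEq, Nat.mod_eq_of_lt hxq] using this
    have hx0 : x = 0 := by rw [← Nat.div_add_mod x g, hd0, hm0]; simp
    omega
  refine ⟨hinj, hne, ?_⟩
  -- surjectivity onto the complement of i
  intro m hmi
  have himg : Finset.image (portG n g (by omega) i) Finset.univ = Finset.univ.erase i := by
    apply Finset.eq_of_subset_of_card_le
    · intro x hx
      simp only [Finset.mem_image] at hx
      obtain ⟨j, _, rfl⟩ := hx
      exact Finset.mem_erase.2 ⟨hne j, Finset.mem_univ _⟩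
    · rw [Finset.card_erase_of_mem (Finset.mem_univ _),
        Finset.card_image_of_injective _ hinj]
      simp
  have hm : m ∈ Finset.image (portG n g (by omega) i) Finset.univ := by
    rw [himg]; exact Finset.mem_erase.2 ⟨hmi, Finset.mem_univ _⟩
  obtain ⟨j, _, hj⟩ := Finset.mem_image.1 hm
  exact ⟨j, hj⟩
end
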